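/- Define L₁(n,b) := ∫₀¹ (Γ(b-p)/Γ(b+1)) · (Γ(n-b+p)/Γ(n-b+1)) · dp/(Γ(1-p)Γ(1+p)). Then lim_{n→∞} (log n)·L₁(n,1) = 1. Equivalently, the expected number of external mutations in the Bolthausen-Sznitman coalescent satisfies (log n/n)·E[SFS_{n,1}] → θ, since E[SFS_{n,1}] = θ·n·L₁(n,1). -/

import Mathlib

open Real

/-- `L₁(n,b) = ∫₀¹ (Γ(b-p)/Γ(b+1)) (Γ(n-b+p)/Γ(n-b+1)) dp/(Γ(1-p)Γ(1+p))`. -/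
noncomputable def L1 (n b : ℕ) : ℝ :=
  ∫ p in (0:ℝ)..1, (Real.Gamma ((b : ℝ) - p) / Real.Gamma ((b : ℝ) + 1)) *
    (Real.Gamma ((n : ℝ) - (b : ℝ) + p) / Real.Gamma ((n : ℝ) - (b : ℝ) + 1)) /
    (Real.Gamma (1 - p) * Real.Gamma (1 + p))

/-
For `p ∈ [0, 1]`, log-convexity of `Γ` gives Wendel's inequalities
`Γ(x + 1) (x + p)^(p - 1) ≤ Γ(x + p) ≤ x^p Γ(x)`, and with them
`n^(p-1) ≤ Γ(n - 1 + p) / (Γ(n) Γ(1 + p)) ≤ ((n - 1) / 2)^(p-1)`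
for the integrand of `L₁(n,1)` once `Γ(1 - p)` cancels. Since
`∫₀¹ a^(p-1) dp = (1 - a⁻¹) / log a`, this squeezes
`log n · L₁(n,1)` between `1 - 1/n` and `log n / (log n - log 4)`.
-/

open Filter Set intervalIntegral Topology
open MeasureTheory (volume)

namespace Real

theorem Gamma_add_le_rpow_mul_Gamma {x p : ℝ} (hx : 0 < x) (hp0 : 0 ≤ p) (hp1 : p ≤ 1) :
    Gamma (x + p) ≤ x ^ p * Gamma x := by
  have hΓx := Gamma_pos_of_pos hx
  have hconv := convexOn_log_Gamma.2 (mem_Ioi.2 hx) (mem_Ioi.2 (by linarith : 0 < x + 1))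
    (sub_nonneg.2 hp1) hp0 (by ring)
  simp only [smul_eq_mul, Function.comp_apply] at hconv
  rw [show (1 - p) * x + p * (x + 1) = x + p by ring, Gamma_add_one hx.ne',
    log_mul hx.ne' hΓx.ne'] at hconv
  rw [← log_le_log_iff (Gamma_pos_of_pos (by linarith)) (by positivity),
    log_mul (by positivity) hΓx.ne', log_rpow hx]
  linarith

theorem Gamma_add_one_le_rpow_mul_Gamma_add {x p : ℝ} (hxp : 0 < x + p) (hp0 : 0 ≤ p)
    (hp1 : p ≤ 1) : Gamma (x + 1) ≤ (x + p) ^ (1 - p) * Gamma (x + p) := by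
  simpa using Gamma_add_le_rpow_mul_Gamma hxp (sub_nonneg.2 hp1) (by linarith : 1 - p ≤ 1)

theorem Gamma_one_add_le_one {p : ℝ} (hp0 : 0 ≤ p) (hp1 : p ≤ 1) : Gamma (1 + p) ≤ 1 := by
  simpa using Gamma_add_le_rpow_mul_Gamma one_pos hp0 hp1

theorem two_rpow_sub_one_le_Gamma_one_add {p : ℝ} (hp0 : 0 ≤ p) (hp1 : p ≤ 1) :
    (2 : ℝ) ^ (p - 1) ≤ Gamma (1 + p) := by
  have h := Gamma_add_one_le_rpow_mul_Gamma_add (x := 1) (by linarith) hp0 hp1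
  have hmono : (1 + p) ^ (1 - p) ≤ (2 : ℝ) ^ (1 - p) :=
    rpow_le_rpow (by linarith) (by linarith) (by linarith)
  rw [one_add_one_eq_two, Gamma_two] at h
  rw [show p - 1 = -(1 - p) by ring, rpow_neg zero_le_two,
    inv_le_iff_one_le_mul₀ (by positivity)]
  nlinarith [Gamma_pos_of_pos (by linarith : 0 < 1 + p)]

end Real

theorem integral_rpow_sub_one {a : ℝ} (ha : 0 < a) (ha1 : a ≠ 1) :
    ∫ p in (0 : ℝ)..1, a ^ (p - 1) = (1 - a⁻¹) / log a := by
  have hlog := log_ne_zero_of_pos_of_ne_one ha ha1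
  simp_rw [rpow_def_of_pos ha, mul_sub, mul_one]
  rw [integral_comp_mul_sub (fun x => exp x) hlog, integral_exp, mul_one, mul_zero, zero_sub,
    sub_self, exp_zero, exp_neg, exp_log ha, smul_eq_mul, inv_mul_eq_div]

theorem intervalIntegrable_rpow_sub_one {a : ℝ} (ha : 0 < a) :
    IntervalIntegrable (fun p : ℝ => a ^ (p - 1)) volume 0 1 :=
  Continuous.intervalIntegrable
    (continuous_const.rpow (continuous_id.sub continuous_const) fun _ => Or.inl ha.ne') 0 1

noncomputable def L1OneIntegrand (N p : ℝ) : ℝ := Gamma (N - 1 + p) / (Gamma N * Gamma (1 + p))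

theorem L1_one_eq_integral (n : ℕ) : L1 n 1 = ∫ p in (0 : ℝ)..1, L1OneIntegrand n p := by
  refine integral_congr_Ioo_of_le zero_le_one fun p hp => ?_
  have hΓ : Gamma (1 - p) ≠ 0 := (Gamma_pos_of_pos (by linarith [hp.2])).ne'
  simp only [L1OneIntegrand, Nat.cast_one, one_add_one_eq_two, Gamma_two, sub_add_cancel]
  field_simp

section L1OneIntegrand

variable {N p : ℝ}

theorem rpow_sub_one_le_L1OneIntegrand (hN : 1 < N) (hp0 : 0 ≤ p) (hp1 : p ≤ 1) :
    N ^ (p - 1) ≤ L1OneIntegrand N p := by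
  have hΓN := Gamma_pos_of_pos (by linarith : 0 < N)
  have hwendel := Gamma_add_one_le_rpow_mul_Gamma_add (x := N - 1) (by linarith) hp0 hp1
  rw [sub_add_cancel] at hwendel
  have hmono : (N - 1 + p) ^ (1 - p) ≤ N ^ (1 - p) :=
    rpow_le_rpow (by linarith) (by linarith) (by linarith)
  have hNp : 0 < N ^ (1 - p) := by positivity
  rw [L1OneIntegrand, le_div_iff₀ (by positivity), show p - 1 = -(1 - p) by ring,
    rpow_neg (by linarith), inv_mul_le_iff₀ hNp]
  calc Gamma N * Gamma (1 + p) ≤ Gamma N :=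
        mul_le_of_le_one_right hΓN.le (Gamma_one_add_le_one hp0 hp1)
    _ ≤ (N - 1 + p) ^ (1 - p) * Gamma (N - 1 + p) := hwendel
    _ ≤ N ^ (1 - p) * Gamma (N - 1 + p) := by gcongr

theorem L1OneIntegrand_le_rpow_sub_one (hN : 1 < N) (hp0 : 0 ≤ p) (hp1 : p ≤ 1) :
    L1OneIntegrand N p ≤ ((N - 1) / 2) ^ (p - 1) := by
  have hN1 : 0 < N - 1 := by linarith
  have hΓN : Gamma N = (N - 1) * Gamma (N - 1) := by
    rw [← Gamma_add_one hN1.ne', sub_add_cancel]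
  have hrpow : (N - 1) ^ p = (N - 1) ^ (p - 1) * (N - 1) := by
    rw [rpow_sub_one hN1.ne', div_mul_cancel₀ _ hN1.ne']
  rw [L1OneIntegrand, div_rpow hN1.le zero_le_two,
    div_le_div_iff₀ (by positivity) (by positivity)]
  calc Gamma (N - 1 + p) * 2 ^ (p - 1) ≤ (N - 1) ^ p * Gamma (N - 1) * 2 ^ (p - 1) := by
        gcongr; exact Gamma_add_le_rpow_mul_Gamma hN1 hp0 hp1
    _ = (N - 1) ^ (p - 1) * (Gamma N * 2 ^ (p - 1)) := by rw [hrpow, hΓN]; ring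
    _ ≤ (N - 1) ^ (p - 1) * (Gamma N * Gamma (1 + p)) := by
        gcongr; exact two_rpow_sub_one_le_Gamma_one_add hp0 hp1

theorem intervalIntegrable_L1OneIntegrand (hN : 1 < N) :
    IntervalIntegrable (L1OneIntegrand N) volume 0 1 := by
  have hΓ : ∀ x, 0 < x → ContinuousAt Gamma x := fun x hx =>
    DifferentiableAt.continuousAt <|
      differentiableAt_Gamma fun m => by linarith [(Nat.cast_nonneg m : (0 : ℝ) ≤ m)]
  refine ContinuousOn.intervalIntegrable fun q hq => ContinuousAt.continuousWithinAt ?_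
  rw [uIcc_of_le zero_le_one] at hq
  have hq1 : 0 < 1 + q := by linarith [hq.1]
  have hNq : 0 < N - 1 + q := by linarith [hq.1]
  refine ((hΓ _ hNq).comp (continuousAt_const.add continuousAt_id)).div
    (continuousAt_const.mul ((hΓ _ hq1).comp (continuousAt_const.add continuousAt_id))) ?_
  exact (mul_pos (Gamma_pos_of_pos (by linarith)) (Gamma_pos_of_pos hq1)).ne'

theorem one_sub_inv_le_log_mul_integral_L1OneIntegrand (hN : 1 < N) :
    1 - N⁻¹ ≤ log N * ∫ p in (0 : ℝ)..1, L1OneIntegrand N p := by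
  have hlog : 0 < log N := log_pos hN
  calc 1 - N⁻¹ = log N * ∫ p in (0 : ℝ)..1, N ^ (p - 1) := by
        rw [integral_rpow_sub_one (by linarith) hN.ne']; field_simp
    _ ≤ log N * ∫ p in (0 : ℝ)..1, L1OneIntegrand N p := by
        gcongr
        refine integral_mono_on (μ := volume) zero_le_one ?_
          (intervalIntegrable_L1OneIntegrand hN)
          fun p hp => rpow_sub_one_le_L1OneIntegrand hN hp.1 hp.2
        exact intervalIntegrable_rpow_sub_one (by linarith)

theorem log_mul_integral_L1OneIntegrand_le (hN : 5 ≤ N) :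
    log N * ∫ p in (0 : ℝ)..1, L1OneIntegrand N p ≤ log N / (log N - log 4) := by
  have hN1 : 1 < N := by linarith
  have hlog : log N - log 4 ≤ log ((N - 1) / 2) := by
    rw [← log_div (by linarith) four_ne_zero]
    exact log_le_log (by positivity) (by linarith)
  have hlog4 : 0 < log N - log 4 := sub_pos.2 (log_lt_log four_pos (by linarith))
  have ha : 1 < (N - 1) / 2 := by linarith
  rw [div_eq_mul_one_div]
  gcongr
  · exact log_nonneg hN1.le
  calc ∫ p in (0 : ℝ)..1, L1OneIntegrand N p
        ≤ ∫ p in (0 : ℝ)..1, ((N - 1) / 2) ^ (p - 1) := by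
        refine integral_mono_on (μ := volume) zero_le_one
          (intervalIntegrable_L1OneIntegrand hN1) ?_
          fun p hp => L1OneIntegrand_le_rpow_sub_one hN1 hp.1 hp.2
        exact intervalIntegrable_rpow_sub_one (by linarith)
    _ = (1 - ((N - 1) / 2)⁻¹) / log ((N - 1) / 2) := integral_rpow_sub_one (by linarith) ha.ne'
    _ ≤ 1 / log ((N - 1) / 2) := by
        gcongr
        · exact (log_pos ha).le
        · exact sub_le_self _ (by positivity)
    _ ≤ 1 / (log N - log 4) := by gcongr

end L1OneIntegrand

theorem tendsto_log_div_log_sub_const (c : ℝ) :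
    Tendsto (fun x : ℝ => log x / (log x - c)) atTop (𝓝 1) := by
  have hlin : Tendsto (fun y : ℝ => y / (y - c)) atTop (𝓝 1) := by
    have h : Tendsto (fun y : ℝ => 1 + c / (y - c)) atTop (𝓝 (1 + 0)) :=
      tendsto_const_nhds.add <|
        tendsto_const_nhds.div_atTop (tendsto_atTop_add_const_right _ _ tendsto_id)
    rw [add_zero] at h
    refine h.congr' ?_
    filter_upwards [eventually_gt_atTop c] with y hy
    have : y - c ≠ 0 := sub_ne_zero.2 hy.ne'
    field_simp
    ring
  exact hlin.comp tendsto_log_atTop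

theorem stmt9 (θ : ℝ) :
    Filter.Tendsto (fun n : ℕ => Real.log n * L1 n 1) Filter.atTop (nhds 1) ∧
    Filter.Tendsto (fun n : ℕ => (Real.log n / (n : ℝ)) * (θ * (n : ℝ) * L1 n 1))
      Filter.atTop (nhds θ) := by
  have hn := tendsto_natCast_atTop_atTop (R := ℝ)
  have hL1 : Tendsto (fun n : ℕ => log n * L1 n 1) atTop (𝓝 1) := by
    have hlower : Tendsto (fun n : ℕ => 1 - (n : ℝ)⁻¹) atTop (𝓝 1) := by
      simpa using tendsto_const_nhds.sub (tendsto_inv_atTop_zero.comp hn)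
    refine tendsto_of_tendsto_of_tendsto_of_le_of_le' hlower
      ((tendsto_log_div_log_sub_const (log 4)).comp hn) ?_ ?_
    · filter_upwards [eventually_gt_atTop 1] with n hn1
      rw [L1_one_eq_integral]
      exact one_sub_inv_le_log_mul_integral_L1OneIntegrand (by exact_mod_cast hn1)
    · filter_upwards [eventually_ge_atTop 5] with n hn5
      rw [Function.comp_apply, L1_one_eq_integral]
      exact log_mul_integral_L1OneIntegrand_le (by exact_mod_cast hn5)
  refine ⟨hL1, ?_⟩
  refine (by simpa using hL1.const_mul θ : Tendsto _ atTop (𝓝 θ)).congr' ?_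
  filter_upwards [eventually_ne_atTop 0] with n hn0
  have : (n : ℝ) ≠ 0 := Nat.cast_ne_zero.2 hn0
  field_simp
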